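/- Suppose f, f_C and f_Γ are real numbers such that, along the product filter atTop on ℕ × ℕ (i.e., as m and n both tend to infinity), (m,n) ↦ ln N(m,n)/(m·n) tends to f, (m,n) ↦ ln C(m,n)/(m·n) tends to f_C, and (m,n) ↦ ln Γ(m,n)/(m·n) tends to f_Γ. Then f = f_C = f_Γ. -/

import Mathlib

open SimpleGraph Filter Real Topology

open Classical in
/-- Number of independent sets (vertex subsets with no two adjacent vertices,
the empty set included) of a finite simple graph. -/
noncomputable def numIndep {V : Type*} [Fintype V] (G : SimpleGraph V) : ℕ :=
  (Finset.univ.filter fun s : Finset V => ∀ u ∈ s, ∀ v ∈ s, ¬ G.Adj u v).card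

/-- `N(m,n)`: number of independent sets of the `m × n` grid graph, the box
product of the path graphs on `m` and `n` vertices. -/
noncomputable def gridN (m n : ℕ) : ℕ :=
  numIndep (pathGraph m □ pathGraph n)


/-- `C(m,n)`: number of independent sets of the `m × n` cylindrical grid graph,
the box product of the cycle graph on `m` vertices with the path graph on `n`
vertices. -/
noncomputable def cylC (m n : ℕ) : ℕ :=
  numIndep (cycleGraph m □ pathGraph n)


/-- The `m × n` twisted cylindrical grid graph: vertices `0, …, m*n - 1`, with
`i` and `j` adjacent iff `|i - j| = 1` or `|i - j| = m`. -/
noncomputable def twistGrid (m n : ℕ) : SimpleGraph (Fin (m * n)) :=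
  SimpleGraph.fromRel (fun i j => i.val + 1 = j.val ∨ i.val + m = j.val)

/-- `Γ(m,n)`: number of independent sets of the `m × n` twisted cylindrical grid graph. -/
noncomputable def twistGamma (m n : ℕ) : ℕ := numIndep (twistGrid m n)

/-!
Up to one extra row the three graphs sandwich each other. Deleting the wrap-around edges of
the cylinder leaves the grid, so `C(m,n) ≤ N(m,n)`, and the grid is the subgraph of the
`(m+1) × n` cylinder induced by all rows but the last, so `N(m,n) ≤ C(m+1,n)`. Likewise,
writing a vertex of the twisted cylinder in base `m` identifies the grid with a spanning
subgraph of it, so `Γ(m,n) ≤ N(m,n)`, and writing it in base `m + 1` identifies the grid with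
an induced subgraph of the `(m+1) × n` twisted cylinder, so `N(m,n) ≤ Γ(m+1,n)`. Since
`log X(m+1,n) / (m n)` has the same limit as `log X(m,n) / (m n)`, the three limits agree.
-/

theorem numIndep_le_of_comap_le {V W : Type*} [Fintype V] [Fintype W]
    {G : SimpleGraph V} {H : SimpleGraph W} (φ : V ↪ W) (h : H.comap φ ≤ G) :
    numIndep G ≤ numIndep H := by
  refine Finset.card_le_card_of_injOn (Finset.map φ) ?_ (Finset.map_injective φ).injOn
  intro s hs
  simp only [Finset.coe_filter, Finset.mem_univ, true_and, Set.mem_ofPred_eq, Finset.mem_map]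
    at hs ⊢
  rintro _ ⟨u, hu, rfl⟩ _ ⟨v, hv, rfl⟩ huv
  exact hs u hu v hv (h huv)

theorem numIndep_anti {V : Type*} [Fintype V] : Antitone (numIndep (V := V)) :=
  fun _ _ h => numIndep_le_of_comap_le (.refl V) h

theorem numIndep_pos {V : Type*} [Fintype V] (G : SimpleGraph V) : 0 < numIndep G :=
  Finset.card_pos.2 ⟨∅, by simp⟩

theorem numIndep_le_of_bijective {V W : Type*} [Fintype V] [Fintype W]
    {G : SimpleGraph V} {H : SimpleGraph W} {f : V → W} (hf : Function.Bijective f)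
    (h : G ≤ H.comap f) : numIndep H ≤ numIndep G := by
  refine numIndep_le_of_comap_le (Equiv.ofBijective f hf).symm.toEmbedding fun u v huv => ?_
  simpa only [comap_adj, Equiv.coe_toEmbedding, Equiv.ofBijective_apply_symm_apply] using h huv

theorem SimpleGraph.boxProd_mono_left {α β : Type*} {G G' : SimpleGraph α} (H : SimpleGraph β)
    (h : G ≤ G') : (G □ H) ≤ (G' □ H) := by
  rintro _ _ (⟨hG, hH⟩ | ⟨hH, hG⟩)
  exacts [.inl ⟨h hG, hH⟩, .inr ⟨hH, hG⟩]

theorem SimpleGraph.cycleGraph_comap_castSucc_le (m : ℕ) :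
    (cycleGraph (m + 1)).comap Fin.castSucc ≤ pathGraph m := by
  match m with
  | 0 => exact fun i => i.elim0
  | m + 1 =>
    intro i j h
    simp only [comap_adj, cycleGraph_adj, sub_eq_iff_eq_add', Fin.coeSucc_eq_succ,
      Fin.ext_iff, Fin.val_castSucc, Fin.val_succ] at h
    rw [pathGraph_adj]
    omega

theorem cylC_le_gridN (m n : ℕ) : cylC m n ≤ gridN m n :=
  numIndep_anti (boxProd_mono_left _ pathGraph_le_cycleGraph)

theorem gridN_le_cylC_succ (m n : ℕ) : gridN m n ≤ cylC (m + 1) n := by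
  refine numIndep_le_of_comap_le (Fin.castSuccEmb.prodMap (.refl _)) ?_
  rintro _ _ (⟨h, hb⟩ | ⟨h, ha⟩)
  · exact .inl ⟨cycleGraph_comap_castSucc_le m h, hb⟩
  · exact .inr ⟨h, Fin.castSucc_injective _ ha⟩

theorem Nat.eq_and_eq_of_add_mul_eq {k a a' b b' : ℕ} (ha : a < k) (ha' : a' < k)
    (h : a + k * b = a' + k * b') : a = a' ∧ b = b' := by
  have hk : 0 < k := by omega
  obtain ⟨hb, ha⟩ := (Nat.div_mod_unique hk).2 ⟨h, ha⟩
  obtain ⟨hb', ha'⟩ := (Nat.div_mod_unique hk).2 ⟨rfl, ha'⟩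
  exact ⟨ha ▸ ha', hb ▸ hb'⟩

def gridToTwist {m k : ℕ} (n : ℕ) (hmk : m ≤ k) : Fin m × Fin n ↪ Fin (k * n) where
  toFun p := ⟨p.1 + k * p.2, by nlinarith [p.1.isLt, p.2.isLt]⟩
  inj' p q h := by
    obtain ⟨h₁, h₂⟩ := Nat.eq_and_eq_of_add_mul_eq (by omega) (by omega) (Fin.val_eq_of_eq h)
    exact Prod.ext (Fin.ext h₁) (Fin.ext h₂)

@[simp]
theorem gridToTwist_apply_val {m k n : ℕ} (hmk : m ≤ k) (p : Fin m × Fin n) :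
    (gridToTwist n hmk p).val = p.1 + k * p.2 := rfl

theorem grid_le_comap_gridToTwist {m k n : ℕ} (hmk : m ≤ k) :
    (pathGraph m □ pathGraph n) ≤ (twistGrid k n).comap (gridToTwist n hmk) := by
  intro p q h
  rw [comap_adj, twistGrid, fromRel_adj]
  refine ⟨(gridToTwist n hmk).injective.ne h.ne, ?_⟩
  simp only [boxProd_adj, pathGraph_adj, Fin.ext_iff] at h
  rcases h with ⟨h | h, hb⟩ | ⟨h | h, ha⟩ <;> simp only [gridToTwist_apply_val] <;> grind

theorem gridToTwist_bijective (m n : ℕ) : Function.Bijective (gridToTwist n (le_refl m)) :=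
  (Fintype.bijective_iff_injective_and_card _).2 ⟨(gridToTwist n _).injective, by simp⟩

theorem comap_gridToTwist_succ_le (m n : ℕ) :
    (twistGrid (m + 1) n).comap (gridToTwist n m.le_succ) ≤ (pathGraph m □ pathGraph n) := by
  -- The digit `a < m` never equals `m`, so adding `1` cannot carry into the second digit.
  have step : ∀ a a' : Fin m, ∀ b b' : Fin n,
      a + (m + 1) * b + 1 = a' + (m + 1) * b' ∨ a + (m + 1) * b + (m + 1) = a' + (m + 1) * b' →
      (pathGraph m □ pathGraph n).Adj (a, b) (a', b') := by
    intro a a' b b' h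
    rw [boxProd_adj, pathGraph_adj, pathGraph_adj]
    rcases h with h | h
    · obtain ⟨ha, hb⟩ := Nat.eq_and_eq_of_add_mul_eq (k := m + 1) (by omega) (by omega)
        (show a + 1 + (m + 1) * b = a' + (m + 1) * b' by omega)
      exact .inl ⟨.inl ha, Fin.ext hb⟩
    · obtain ⟨ha, hb⟩ := Nat.eq_and_eq_of_add_mul_eq (k := m + 1) (by omega) (by omega)
        (show a + (m + 1) * (b + 1) = a' + (m + 1) * b' by rw [mul_add, mul_one, ← h]; ring)
      exact .inr ⟨.inl hb, Fin.ext ha⟩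
  rintro ⟨a, b⟩ ⟨a', b'⟩ h
  rw [comap_adj, twistGrid, fromRel_adj] at h
  simp only [gridToTwist_apply_val] at h
  obtain ⟨-, h | h⟩ := h
  exacts [step a a' b b' h, (step a' a b' b h).symm]

theorem twistGamma_le_gridN (m n : ℕ) : twistGamma m n ≤ gridN m n :=
  numIndep_le_of_bijective (gridToTwist_bijective m n) (grid_le_comap_gridToTwist (le_refl m))

theorem gridN_le_twistGamma_succ (m n : ℕ) : gridN m n ≤ twistGamma (m + 1) n :=
  numIndep_le_of_comap_le (gridToTwist n m.le_succ) (comap_gridToTwist_succ_le m n)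

noncomputable def logPerSite (X : ℕ → ℕ → ℕ) (p : ℕ × ℕ) : ℝ :=
  Real.log (X p.1 p.2) / ((p.1 : ℝ) * (p.2 : ℝ))

theorem le_of_tendsto_logPerSite {X Y : ℕ → ℕ → ℕ} {a b : ℝ} (hX : ∀ m n, 0 < X m n)
    (hXY : ∀ m n, X m n ≤ Y m n) (ha : Tendsto (logPerSite X) atTop (𝓝 a))
    (hb : Tendsto (logPerSite Y) atTop (𝓝 b)) : a ≤ b := by
  refine le_of_tendsto_of_tendsto' ha hb fun p => ?_
  unfold logPerSite
  gcongr
  · exact_mod_cast hX p.1 p.2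
  · exact_mod_cast hXY p.1 p.2

theorem tendsto_logPerSite_succ {X : ℕ → ℕ → ℕ} {c : ℝ}
    (h : Tendsto (logPerSite X) atTop (𝓝 c)) :
    Tendsto (logPerSite fun m n => X (m + 1) n) atTop (𝓝 c) := by
  have hshift : Tendsto (Prod.map (· + 1) id : ℕ × ℕ → ℕ × ℕ) atTop atTop := by
    rw [← prod_atTop_atTop_eq]
    exact (tendsto_add_atTop_nat 1).prodMap tendsto_id
  have hratio : Tendsto (fun p : ℕ × ℕ => 1 + 1 / (p.1 : ℝ)) atTop (𝓝 1) := by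
    rw [← prod_atTop_atTop_eq]
    simpa using tendsto_const_nhds.add
      ((tendsto_one_div_atTop_nhds_zero_nat (𝕜 := ℝ)).comp tendsto_fst)
  refine (mul_one c ▸ (h.comp hshift).mul hratio).congr' ?_
  filter_upwards [eventually_ge_atTop (1, 1)] with p ⟨hm₁, hn₁⟩
  have hm : (p.1 : ℝ) ≠ 0 := Nat.cast_ne_zero.2 (by omega)
  have hn : (p.2 : ℝ) ≠ 0 := Nat.cast_ne_zero.2 (by omega)
  simp only [Function.comp_apply, logPerSite, Prod.map_fst, Prod.map_snd, id]
  push_cast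
  field_simp

theorem free_energies_equal (f fC fΓ : ℝ)
    (hf : Tendsto (fun p : ℕ × ℕ =>
        Real.log (gridN p.1 p.2) / ((p.1 : ℝ) * (p.2 : ℝ))) atTop (𝓝 f))
    (hfC : Tendsto (fun p : ℕ × ℕ =>
        Real.log (cylC p.1 p.2) / ((p.1 : ℝ) * (p.2 : ℝ))) atTop (𝓝 fC))
    (hfΓ : Tendsto (fun p : ℕ × ℕ =>
        Real.log (twistGamma p.1 p.2) / ((p.1 : ℝ) * (p.2 : ℝ))) atTop (𝓝 fΓ)) :
    f = fC ∧ fC = fΓ := by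
  have hf_eq_fC : f = fC := le_antisymm
    (le_of_tendsto_logPerSite (fun _ _ => numIndep_pos _) gridN_le_cylC_succ hf
      (tendsto_logPerSite_succ hfC))
    (le_of_tendsto_logPerSite (fun _ _ => numIndep_pos _) cylC_le_gridN hfC hf)
  have hf_eq_fΓ : f = fΓ := le_antisymm
    (le_of_tendsto_logPerSite (fun _ _ => numIndep_pos _) gridN_le_twistGamma_succ hf
      (tendsto_logPerSite_succ hfΓ))
    (le_of_tendsto_logPerSite (fun _ _ => numIndep_pos _) twistGamma_le_gridN hfΓ hf)
  exact ⟨hf_eq_fC, hf_eq_fC ▸ hf_eq_fΓ⟩
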